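/- Let k be an algebraically closed field, and let Λ be the path algebra of the quiver with vertices 0,1, arrows α_0, α_1: 1→0 and β: 0→1 modulo βα_iβ = 0 (i = 0,1). Define R(λ) for λ ∈ k as the Λ-module with underlying Kronecker representation (k, k; id, λ) and β acting as 0, and R(∞) = (k, k; 0, id) with β acting as 0. Then for λ ∈ k there is a nonsplit extension of R(λ) by R(∞) in mod Λ, given by letting β act nontrivially. -/

import Mathlib

/-- A finite-dimensional module over Λ = k⟨quiver with vertices 0,1, arrows
α₀, α₁ : 1 → 0, β : 0 → 1⟩/(βα₀β, βα₁β), viewed as a representation: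
spaces V0, V1, maps a0, a1 : V1 → V0 and b : V0 → V1 with b∘aᵢ∘b = 0. -/
structure LRep (k : Type) [Field k] where
  V0 : Type
  V1 : Type
  [acg0 : AddCommGroup V0]
  [acg1 : AddCommGroup V1]
  [mod0 : Module k V0]
  [mod1 : Module k V1]
  fd0 : FiniteDimensional k V0
  fd1 : FiniteDimensional k V1
  a0 : V1 →ₗ[k] V0
  a1 : V1 →ₗ[k] V0
  b : V0 →ₗ[k] V1
  rel0 : b ∘ₗ a0 ∘ₗ b = 0
  rel1 : b ∘ₗ a1 ∘ₗ b = 0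

attribute [instance] LRep.acg0 LRep.acg1 LRep.mod0 LRep.mod1

variable {k : Type} [Field k]

/-- A homomorphism of Λ-modules. -/
structure LHom (M N : LRep k) where
  f0 : M.V0 →ₗ[k] N.V0
  f1 : M.V1 →ₗ[k] N.V1
  comma0 : f0 ∘ₗ M.a0 = N.a0 ∘ₗ f1
  comma1 : f0 ∘ₗ M.a1 = N.a1 ∘ₗ f1
  commb : f1 ∘ₗ M.b = N.b ∘ₗ f0

/-- The Λ-modules R(λ), λ ∈ P¹(k) = k ∪ {∞} (`none` = ∞): the simple regular
Kronecker modules R(λ) = (k, k; id, λ·id) for λ ∈ k and R(∞) = (k, k; 0, id),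
with β acting as zero. -/
def LR : Option k → LRep k
  | some l =>
    { V0 := k, V1 := k, fd0 := inferInstance, fd1 := inferInstance
      a0 := LinearMap.id, a1 := l • LinearMap.id, b := 0
      rel0 := by simp, rel1 := by simp }
  | none =>
    { V0 := k, V1 := k, fd0 := inferInstance, fd1 := inferInstance
      a0 := 0, a1 := LinearMap.id, b := 0
      rel0 := by simp, rel1 := by simp }

/-- An extension 0 → B → E → A → 0 of Λ-modules. -/
structure LExt (A B : LRep k) where
  E : LRep k
  i : LHom B E
  p : LHom E A
  inj0 : Function.Injective i.f0
  inj1 : Function.Injective i.f1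
  surj0 : Function.Surjective p.f0
  surj1 : Function.Surjective p.f1
  exact0 : LinearMap.range i.f0 = LinearMap.ker p.f0
  exact1 : LinearMap.range i.f1 = LinearMap.ker p.f1

/-- An extension splits iff the inclusion admits a retraction. -/
def LExt.Splits {A B : LRep k} (X : LExt A B) : Prop :=
  ∃ r : LHom X.E B, (∀ x, r.f0 (X.i.f0 x) = x) ∧ (∀ x, r.f1 (X.i.f1 x) = x)

/-!
The extension is `R(∞) ⊕ R(λ)` with `β` sending the vertex-0 space of `R(λ)` isomorphically onto
the vertex-1 space of `R(∞)`. A retraction onto `R(∞)` must intertwine `β`, which is zero on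
`R(∞)`, so it kills the image of `β`; but that image is the vertex-1 space of `R(∞)` itself.
-/

def LRep.glue (A B : LRep k) (φ : A.V0 →ₗ[k] B.V1) : LRep k where
  V0 := B.V0 × A.V0
  V1 := B.V1 × A.V1
  fd0 := have := B.fd0; have := A.fd0; inferInstance
  fd1 := have := B.fd1; have := A.fd1; inferInstance
  a0 := B.a0.prodMap A.a0
  a1 := B.a1.prodMap A.a1
  b := LinearMap.inl k _ _ ∘ₗ φ ∘ₗ LinearMap.snd k _ _
  rel0 := by ext <;> simp
  rel1 := by ext <;> simp

namespace LExt

variable {A B : LRep k}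

theorem not_splits_of_incl_mem_range_b (X : LExt A B) (hB : B.b = 0) {x : B.V1} (hx : x ≠ 0)
    (hmem : X.i.f1 x ∈ LinearMap.range X.E.b) : ¬ X.Splits := by
  rintro ⟨r, -, hr1⟩
  obtain ⟨y, hy⟩ := hmem
  have hr_b : r.f1 (X.E.b y) = B.b (r.f0 y) := LinearMap.congr_fun r.commb y
  rw [hy, hr1, hB, LinearMap.zero_apply] at hr_b
  exact hx hr_b

def glue (hA : A.b = 0) (hB : B.b = 0) (φ : A.V0 →ₗ[k] B.V1) : LExt A B where
  E := A.glue B φ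
  i :=
    { f0 := LinearMap.inl k _ _
      f1 := LinearMap.inl k _ _
      comma0 := LinearMap.ext fun _ => Prod.ext rfl (map_zero A.a0).symm
      comma1 := LinearMap.ext fun _ => Prod.ext rfl (map_zero A.a1).symm
      commb := by rw [hB]; exact LinearMap.ext fun _ => Prod.ext (map_zero φ).symm rfl }
  p :=
    { f0 := LinearMap.snd k _ _
      f1 := LinearMap.snd k _ _
      comma0 := rfl
      comma1 := rfl
      commb := by rw [hA]; rfl }
  inj0 := LinearMap.inl_injective
  inj1 := LinearMap.inl_injective
  surj0 := LinearMap.snd_surjective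
  surj1 := LinearMap.snd_surjective
  exact0 := LinearMap.range_inl k _ _
  exact1 := LinearMap.range_inl k _ _

variable (hA : A.b = 0) (hB : B.b = 0) {φ : A.V0 →ₗ[k] B.V1}

theorem glue_b_ne_zero (hφ : φ ≠ 0) : (glue hA hB φ).E.b ≠ 0 := by
  intro h
  exact hφ (LinearMap.ext fun y => congr_arg Prod.fst (LinearMap.congr_fun h (0, y)))

theorem not_splits_glue (hφ : φ ≠ 0) : ¬ (glue hA hB φ).Splits := by
  obtain ⟨y, hy⟩ := DFunLike.ne_iff.mp hφ
  exact (glue hA hB φ).not_splits_of_incl_mem_range_b hB hy ⟨(0, y), rfl⟩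

end LExt

theorem stmt13 (k : Type) [Field k] (l : k) :
    ∃ X : LExt (LR (some l)) (LR (none : Option k)), X.E.b ≠ 0 ∧ ¬ X.Splits := by
  have hφ : (LinearMap.id : k →ₗ[k] k) ≠ 0 := fun h => one_ne_zero (LinearMap.congr_fun h 1)
  exact ⟨LExt.glue rfl rfl LinearMap.id, LExt.glue_b_ne_zero rfl rfl hφ,
    LExt.not_splits_glue rfl rfl hφ⟩
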